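/- arXiv:2312.05397 — 4 statements merged into one kernel-verified Lean document; each statement's English description precedes it below -/
import Mathlib

section
/- There exists a constant C, depending only on l, |σ(0)|, c and K (and not on m), such that for every width m ≥ 1, every input s ∈ ℝ^d with ‖s‖ ≤ 1, every b ∈ ℝ^m with |b_r| ≤ 1 for all r, and all weights θ = (θ^(1), …, θ^(K)) with ‖θ^(k)‖_F ≤ c√m for all k, the gradient of the network output V(s, θ) = (1/√m) b^T x^(K) with respect to all entries of θ^(1), …, θ^(K) satisfies ‖∇_θ V(s, θ)‖ ≤ C. -/
/-!
The norm of `fderiv V θ` is at most any Lipschitz constant of `V` on a neighbourhood of `θ`, so it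
suffices to bound `|V η - V θ|` for `‖η - θ‖ ≤ 1`. On that ball every weight block still has
squared Frobenius norm at most `(2c² + 2) m`. Thanks to the `1/√m` scaling, Cauchy–Schwarz
through one layer turns the squared bounds `‖x^(k)‖² ≤ β_k` and
`‖x^(k)(η) - x^(k)(θ)‖² ≤ μ_k ‖η - θ‖²` into the same bounds for layer `k + 1`, with recursions for
`β_k` and `μ_k` in which `m` cancels. The readout costs nothing more, since `‖b‖² ≤ m`.
-/

open Finset

namespace FCNet

lemma sq_le_of_sqrt_le_mul_sqrt {S c M : ℝ} (hS : 0 ≤ S) (hM : 0 ≤ M)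
    (h : Real.sqrt S ≤ c * Real.sqrt M) : S ≤ c ^ 2 * M := by
  calc S = Real.sqrt S ^ 2 := (Real.sq_sqrt hS).symm
    _ ≤ (c * Real.sqrt M) ^ 2 := pow_le_pow_left₀ (Real.sqrt_nonneg S) h 2
    _ = c ^ 2 * M := by rw [mul_pow, Real.sq_sqrt hM]

lemma sq_lipschitz_of_abs {σ : ℝ → ℝ} {l : ℝ} (hσ : ∀ u v, |σ u - σ v| ≤ l * |u - v|) (u v : ℝ) :
    (σ u - σ v) ^ 2 ≤ l ^ 2 * (u - v) ^ 2 := by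
  rw [← sq_abs (σ u - σ v), ← sq_abs (u - v), ← mul_pow]
  exact pow_le_pow_left₀ (abs_nonneg _) (hσ u v) 2

section Layer

variable {ι : Type*} [Fintype ι]

def frobSq {κ : Type*} [Fintype κ] (W : κ → ι → ℝ) : ℝ := ∑ i, ∑ j, W i j ^ 2

noncomputable def layer (σ : ℝ → ℝ) (m : ℕ) (W : Fin m → ι → ℝ) (v : ι → ℝ) : Fin m → ℝ :=
  fun i => 1 / Real.sqrt m * σ (∑ j, W i j * v j)

lemma sq_sum_mul_le {f g : ι → ℝ} {B : ℝ} (hg : ∑ j, g j ^ 2 ≤ B) :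
    (∑ j, f j * g j) ^ 2 ≤ (∑ j, f j ^ 2) * B :=
  (sum_mul_sq_le_sq_mul_sq _ _ _).trans (by gcongr)

lemma frobSq_nonneg {κ : Type*} [Fintype κ] (W : κ → ι → ℝ) : 0 ≤ frobSq W :=
  sum_nonneg fun _ _ => sum_nonneg fun _ _ => sq_nonneg _

lemma frobSq_le_two_mul_add {κ : Type*} [Fintype κ] (W W' : κ → ι → ℝ) :
    frobSq W ≤ 2 * frobSq W' + 2 * frobSq (W - W') := by
  simp only [frobSq, mul_sum, ← sum_add_distrib, Pi.sub_apply]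
  gcongr with i _ j _
  nlinarith [sq_nonneg (2 * W' i j - W i j)]

variable {σ : ℝ → ℝ} {l : ℝ} {m : ℕ}

lemma sq_le_of_sq_lipschitz (hσ : ∀ u v, (σ u - σ v) ^ 2 ≤ l ^ 2 * (u - v) ^ 2) (u : ℝ) :
    σ u ^ 2 ≤ 2 * |σ 0| ^ 2 + 2 * l ^ 2 * u ^ 2 := by
  nlinarith [hσ u 0, sq_nonneg (σ u - 2 * σ 0), sq_abs (σ 0)]

lemma layer_sq (W : Fin m → ι → ℝ) (v : ι → ℝ) (i : Fin m) :
    layer σ m W v i ^ 2 = σ (∑ j, W i j * v j) ^ 2 / m := by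
  rw [layer, mul_pow, div_pow, Real.sq_sqrt m.cast_nonneg]
  ring

lemma layer_sub_layer_sq (W W' : Fin m → ι → ℝ) (v v' : ι → ℝ) (i : Fin m) :
    (layer σ m W v i - layer σ m W' v' i) ^ 2
      = (σ (∑ j, W i j * v j) - σ (∑ j, W' i j * v' j)) ^ 2 / m := by
  rw [layer, layer, ← mul_sub, mul_pow, div_pow, Real.sq_sqrt m.cast_nonneg]
  ring

lemma sum_layer_sq_le (hσ : ∀ u v, (σ u - σ v) ^ 2 ≤ l ^ 2 * (u - v) ^ 2) (hm : 0 < m)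
    {W : Fin m → ι → ℝ} {v : ι → ℝ} {A B : ℝ} (hW : frobSq W ≤ A * m)
    (hv : ∑ j, v j ^ 2 ≤ B) :
    ∑ i, layer σ m W v i ^ 2 ≤ 2 * |σ 0| ^ 2 + 2 * l ^ 2 * A * B := by
  have hB : 0 ≤ B := (sum_nonneg fun j _ => sq_nonneg (v j)).trans hv
  have hm' : (0 : ℝ) < m := Nat.cast_pos.mpr hm
  calc ∑ i, layer σ m W v i ^ 2
      ≤ ∑ i, (2 * |σ 0| ^ 2 + 2 * l ^ 2 * ((∑ j, W i j ^ 2) * B)) / m := by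
        gcongr with i
        rw [layer_sq]
        gcongr
        exact (sq_le_of_sq_lipschitz hσ _).trans (by gcongr; exact sq_sum_mul_le hv)
    _ = (m * (2 * |σ 0| ^ 2) + 2 * l ^ 2 * B * frobSq W) / m := by
        rw [← sum_div, sum_add_distrib, frobSq, mul_sum, sum_const, card_univ, Fintype.card_fin,
          nsmul_eq_mul]
        congr 2
        exact sum_congr rfl fun i _ => by ring
    _ ≤ (m * (2 * |σ 0| ^ 2) + 2 * l ^ 2 * B * (A * m)) / m := by gcongr
    _ = 2 * |σ 0| ^ 2 + 2 * l ^ 2 * A * B := by field_simp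

lemma sum_layer_sub_sq_le (hσ : ∀ u v, (σ u - σ v) ^ 2 ≤ l ^ 2 * (u - v) ^ 2) (hm : 1 ≤ m)
    {W W' : Fin m → ι → ℝ} {v v' : ι → ℝ} {A B D E : ℝ} (hW' : frobSq W' ≤ A * m)
    (hv : ∑ j, v j ^ 2 ≤ B) (hdW : frobSq (W - W') ≤ D) (hdv : ∑ j, (v - v') j ^ 2 ≤ E) :
    ∑ i, (layer σ m W v - layer σ m W' v') i ^ 2 ≤ 2 * l ^ 2 * (B * D + A * E) := by
  have hB : 0 ≤ B := (sum_nonneg fun j _ => sq_nonneg (v j)).trans hv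
  have hD : 0 ≤ D := (frobSq_nonneg _).trans hdW
  have hE : 0 ≤ E := (sum_nonneg fun j _ => sq_nonneg _).trans hdv
  have hm' : (1 : ℝ) ≤ m := Nat.one_le_cast.mpr hm
  have hsplit : ∀ i, (∑ j, W i j * v j) - ∑ j, W' i j * v' j
      = ∑ j, (W - W') i j * v j + ∑ j, W' i j * (v - v') j := fun i => by
    simp only [Pi.sub_apply, ← sum_sub_distrib, ← sum_add_distrib]
    exact sum_congr rfl fun j _ => by ring
  calc ∑ i, (layer σ m W v - layer σ m W' v') i ^ 2
      ≤ ∑ i, l ^ 2 * (2 * ((∑ j, (W - W') i j ^ 2) * B + (∑ j, W' i j ^ 2) * E)) / m := by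
        gcongr with i
        rw [Pi.sub_apply, layer_sub_layer_sq]
        gcongr
        refine (hσ _ _).trans ?_
        rw [hsplit]
        gcongr
        exact add_sq_le.trans (by gcongr <;> exact sq_sum_mul_le (by assumption))
    _ = 2 * l ^ 2 * (B * frobSq (W - W') + E * frobSq W') / m := by
        rw [← sum_div, frobSq, frobSq, mul_sum, mul_sum, ← sum_add_distrib, mul_sum]
        congr 1
        exact sum_congr rfl fun i _ => by ring
    _ ≤ 2 * l ^ 2 * (B * D + E * (A * m)) / m := by gcongr
    _ = 2 * l ^ 2 * (B * D / m + A * E) := by field_simp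
    _ ≤ 2 * l ^ 2 * (B * D + A * E) := by
        gcongr
        exact div_le_self (mul_nonneg hB hD) hm'

end Layer

section Network

variable {K m d : ℕ}

abbrev Params (K m d : ℕ) := EuclideanSpace ℝ ((Fin m × Fin d) ⊕ (Fin (K - 1) × Fin m × Fin m))

def inputWeights (θ : Params K m d) : Fin m → Fin d → ℝ := fun i j => θ (Sum.inl (i, j))

def hiddenWeights (θ : Params K m d) (k : Fin (K - 1)) : Fin m → Fin m → ℝ :=
  fun i j => θ (Sum.inr (k, i, j))

lemma inputWeights_sub (η θ : Params K m d) :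
    inputWeights (η - θ) = inputWeights η - inputWeights θ := rfl

lemma hiddenWeights_sub (η θ : Params K m d) (k : Fin (K - 1)) :
    hiddenWeights (η - θ) k = hiddenWeights η k - hiddenWeights θ k := rfl

lemma norm_sq_eq_frobSq (θ : Params K m d) :
    ‖θ‖ ^ 2 = frobSq (inputWeights θ) + ∑ k, frobSq (hiddenWeights θ k) := by
  rw [EuclideanSpace.real_norm_sq_eq, Fintype.sum_sum_type]
  simp only [Fintype.sum_prod_type, frobSq, inputWeights, hiddenWeights]

def BlockwiseBounded (R : ℝ) (θ : Params K m d) : Prop :=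
  frobSq (inputWeights θ) ≤ R ∧ ∀ k, frobSq (hiddenWeights θ k) ≤ R

lemma blockwiseBounded_norm_sq (θ : Params K m d) : BlockwiseBounded (‖θ‖ ^ 2) θ := by
  rw [norm_sq_eq_frobSq]
  refine ⟨le_add_of_nonneg_right (sum_nonneg fun k _ => frobSq_nonneg _), fun k => ?_⟩
  exact (single_le_sum (fun k _ => frobSq_nonneg _) (mem_univ k)).trans
    (le_add_of_nonneg_left (frobSq_nonneg _))

lemma BlockwiseBounded.mono {R R' : ℝ} {θ : Params K m d} (h : BlockwiseBounded R θ)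
    (hR : R ≤ R') : BlockwiseBounded R' θ :=
  ⟨h.1.trans hR, fun k => (h.2 k).trans hR⟩

lemma BlockwiseBounded.of_norm_sub_le_one {R : ℝ} {η θ : Params K m d}
    (hθ : BlockwiseBounded R θ) (h : ‖η - θ‖ ≤ 1) : BlockwiseBounded (2 * R + 2) η := by
  have hsq : ‖η - θ‖ ^ 2 ≤ 1 := pow_le_one₀ (norm_nonneg _) h
  obtain ⟨h₁, h₂⟩ := blockwiseBounded_norm_sq (η - θ)
  refine ⟨(frobSq_le_two_mul_add _ (inputWeights θ)).trans ?_, fun k =>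
    (frobSq_le_two_mul_add _ (hiddenWeights θ k)).trans ?_⟩
  · rw [← inputWeights_sub]; linarith [hθ.1]
  · rw [← hiddenWeights_sub]; linarith [hθ.2 k, h₂ k]

/-- Index `0` is the input `s`, which has `‖s‖² ≤ 1` and does not depend on the weights. -/
def activationSqBound (l s₀ A : ℝ) : ℕ → ℝ
  | 0 => 1
  | k + 1 => 2 * s₀ ^ 2 + 2 * l ^ 2 * A * activationSqBound l s₀ A k

def lipschitzSqBound (l s₀ A : ℝ) : ℕ → ℝ
  | 0 => 0
  | k + 1 => 2 * l ^ 2 * (activationSqBound l s₀ A k + A * lipschitzSqBound l s₀ A k)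

theorem network_sq_bounds {σ : ℝ → ℝ} {l : ℝ}
    (hσ : ∀ u v, (σ u - σ v) ^ 2 ≤ l ^ 2 * (u - v) ^ 2) (hm : 1 ≤ m) {s : Fin d → ℝ}
    (hs : ∑ j, s j ^ 2 ≤ 1) {x : Params K m d → ℕ → Fin m → ℝ}
    (hx₁ : ∀ θ, x θ 1 = layer σ m (inputWeights θ) s)
    (hx : ∀ θ (k : Fin (K - 1)), x θ (k + 2) = layer σ m (hiddenWeights θ k) (x θ (k + 1)))
    {η η' : Params K m d} {A D : ℝ} (hη : BlockwiseBounded (A * m) η)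
    (hη' : BlockwiseBounded (A * m) η') (hD : BlockwiseBounded D (η - η')) :
    ∀ k, k + 1 ≤ K →
      ∑ i, x η (k + 1) i ^ 2 ≤ activationSqBound l |σ 0| A (k + 1) ∧
      ∑ i, (x η (k + 1) - x η' (k + 1)) i ^ 2 ≤ lipschitzSqBound l |σ 0| A (k + 1) * D := by
  intro k
  induction k with
  | zero =>
    intro _
    rw [zero_add, hx₁, hx₁]
    refine ⟨sum_layer_sq_le hσ hm hη.1 hs, ?_⟩
    refine (sum_layer_sub_sq_le (W := inputWeights η) hσ hm hη'.1 hs hD.1 (E := 0)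
      (by simp)).trans_eq ?_
    simp only [lipschitzSqBound, activationSqBound]
    ring
  | succ k ih =>
    intro hk
    obtain ⟨ihx, ihdx⟩ := ih (by omega)
    have hk' : k < K - 1 := by omega
    rw [hx η ⟨k, hk'⟩, hx η' ⟨k, hk'⟩]
    refine ⟨sum_layer_sq_le hσ hm (hη.2 _) ihx, ?_⟩
    refine (sum_layer_sub_sq_le (W := hiddenWeights η ⟨k, hk'⟩) hσ hm (hη'.2 _) ihx (hD.2 _)
      ihdx).trans_eq ?_
    conv_rhs => rw [lipschitzSqBound]
    ring

end Network

lemma abs_readout_le {m : ℕ} {b : Fin m → ℝ} (hb : ∀ r, |b r| ≤ 1) (y : Fin m → ℝ) :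
    |1 / Real.sqrt m * ∑ r, b r * y r| ≤ Real.sqrt (∑ r, y r ^ 2) := by
  rcases Nat.eq_zero_or_pos m with rfl | hm
  · simp
  have hb2 : ∑ r, b r ^ 2 ≤ m := by
    calc ∑ r, b r ^ 2 ≤ ∑ _r : Fin m, (1 : ℝ) := by
          gcongr with r; exact (sq_le_one_iff_abs_le_one _).mpr (hb r)
      _ = m := by simp
  refine Real.abs_le_sqrt ?_
  rw [mul_pow, div_pow, Real.sq_sqrt m.cast_nonneg, one_pow, one_div_mul_eq_div,
    div_le_iff₀ (Nat.cast_pos.mpr hm), mul_comm]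
  exact sq_sum_mul_le (le_refl _) |>.trans (by gcongr)

end FCNet

open FCNet

/-- There is a constant `C = C(l, |σ 0|, c, K)`, independent of the width `m`, bounding the
norm of the gradient of the `K`-hidden-layer network output `V(s,θ) = (1/√m) bᵀ x^(K)` with
respect to all the weights, provided `‖s‖ ≤ 1`, `|b_r| ≤ 1`, and each layer's weight matrix
has Frobenius norm at most `c √m`.  The weights are packed into the Euclidean space indexed
by `(Fin m × Fin d) ⊕ (Fin (K-1) × Fin m × Fin m)` (layer 1, then layers 2..K), so that the
operator norm of the derivative equals the Euclidean norm of the gradient. -/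
theorem stmt9 :
    ∃ C : ℝ → ℝ → ℝ → ℕ → ℝ,
      ∀ (l c : ℝ) (K : ℕ), 1 ≤ K →
      ∀ σ : ℝ → ℝ, Differentiable ℝ σ → (∀ u v, |σ u - σ v| ≤ l * |u - v|) →
      ∀ (d m : ℕ), 1 ≤ m →
      ∀ s : EuclideanSpace ℝ (Fin d), ‖s‖ ≤ 1 →
      ∀ b : Fin m → ℝ, (∀ r, |b r| ≤ 1) →
      ∀ (x : EuclideanSpace ℝ ((Fin m × Fin d) ⊕ (Fin (K - 1) × Fin m × Fin m)) →
            ℕ → Fin m → ℝ)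
        (V : EuclideanSpace ℝ ((Fin m × Fin d) ⊕ (Fin (K - 1) × Fin m × Fin m)) → ℝ),
        (∀ θ i, x θ 1 i = (1 / Real.sqrt m) * σ (∑ j, θ (Sum.inl (i, j)) * s j)) →
        (∀ θ (k : Fin (K - 1)) i,
          x θ (k.1 + 2) i
            = (1 / Real.sqrt m) * σ (∑ j, θ (Sum.inr (k, i, j)) * x θ (k.1 + 1) j)) →
        (∀ θ, V θ = (1 / Real.sqrt m) * ∑ r, b r * x θ K r) →
      ∀ θ : EuclideanSpace ℝ ((Fin m × Fin d) ⊕ (Fin (K - 1) × Fin m × Fin m)),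
        Real.sqrt (∑ i, ∑ j, θ (Sum.inl (i, j)) ^ 2) ≤ c * Real.sqrt m →
        (∀ k : Fin (K - 1),
          Real.sqrt (∑ i, ∑ j, θ (Sum.inr (k, i, j)) ^ 2) ≤ c * Real.sqrt m) →
        ‖fderiv ℝ V θ‖ ≤ C l |σ 0| c K := by
  refine ⟨fun l s₀ c K => Real.sqrt (lipschitzSqBound l s₀ (2 * c ^ 2 + 2) K), ?_⟩
  intro l c K hK σ _ hσ d m hm s hs b hb x V hx₁ hx hV θ hθ₁ hθ
  have hm' : (1 : ℝ) ≤ m := Nat.one_le_cast.mpr hm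
  have hθA : BlockwiseBounded (c ^ 2 * m) θ :=
    ⟨sq_le_of_sqrt_le_mul_sqrt (frobSq_nonneg _) m.cast_nonneg hθ₁,
      fun k => sq_le_of_sqrt_le_mul_sqrt (frobSq_nonneg _) m.cast_nonneg (hθ k)⟩
  refine norm_fderiv_le_of_lip' ℝ (Real.sqrt_nonneg _) ?_
  filter_upwards [Metric.closedBall_mem_nhds θ one_pos] with η hη
  have hηA := hθA.of_norm_sub_le_one (mem_closedBall_iff_norm.mp hη)
  obtain ⟨-, hlip⟩ := network_sq_bounds (sq_lipschitz_of_abs hσ) hm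
    (by rwa [← EuclideanSpace.real_norm_sq_eq, sq_le_one_iff₀ (norm_nonneg _)])
    (fun θ => funext (hx₁ θ)) (fun θ k => funext (hx θ k)) (A := 2 * c ^ 2 + 2)
    (hηA.mono (by nlinarith)) (hθA.mono (by nlinarith)) (blockwiseBounded_norm_sq (η - θ))
    (K - 1) (by omega)
  rw [Nat.sub_add_cancel hK] at hlip
  calc ‖V η - V θ‖ = |1 / Real.sqrt m * ∑ r, b r * (x η K - x θ K) r| := by
        simp only [hV, Real.norm_eq_abs, Pi.sub_apply, mul_sub, sum_sub_distrib]
    _ ≤ Real.sqrt (∑ r, (x η K - x θ K) r ^ 2) := abs_readout_le hb _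
    _ ≤ Real.sqrt (lipschitzSqBound l |σ 0| (2 * c ^ 2 + 2) K * ‖η - θ‖ ^ 2) :=
        Real.sqrt_le_sqrt hlip
    _ = Real.sqrt (lipschitzSqBound l |σ 0| (2 * c ^ 2 + 2) K) * ‖η - θ‖ := by
        rw [Real.sqrt_mul' _ (sq_nonneg _), Real.sqrt_sq (norm_nonneg _)]
end

section
/- Let (X_t)_{t≥0} be a sequence of nonnegative real numbers and let b, c > 0 be constants such that X_{t+1} ≤ (1 − c/(t+1)) X_t + b/(t+1)² for every t ≥ 0. Then X_t converges to 0 as t → ∞. -/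
/-- If a nonnegative sequence satisfies `X_{t+1} ≤ (1 − c/(t+1)) X_t + b/(t+1)²` for
constants `b, c > 0`, then `X_t → 0`. -/
theorem stmt14 (X : ℕ → ℝ) (hX : ∀ t, 0 ≤ X t) (b c : ℝ) (hb : 0 < b) (hc : 0 < c)
    (hrec : ∀ t : ℕ, X (t + 1) ≤ (1 - c / ((t : ℝ) + 1)) * X t + b / ((t : ℝ) + 1) ^ 2) :
    Filter.Tendsto X Filter.atTop (nhds 0) := by
  have key : ∀ ε : ℝ, 0 < ε → ∃ N, ∀ t ≥ N, X t ≤ ε := by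
    intro ε hε
    obtain ⟨T, hT⟩ := exists_nat_ge (max c (2 * b / (c * ε)))
    have hT1 : c ≤ (T : ℝ) := le_trans (le_max_left _ _) hT
    have hT2 : 2 * b / (c * ε) ≤ (T : ℝ) := le_trans (le_max_right _ _) hT
    have hq : ∀ t : ℕ, T ≤ t → c / ((t : ℝ) + 1) ≤ 1 := by
      intro t ht
      rw [div_le_one (by positivity)]
      have : (T : ℝ) ≤ t := Nat.cast_le.2 ht
      linarith
    have hqpos : ∀ t : ℕ, 0 < c / ((t : ℝ) + 1) := by
      intro t; positivity
    have hbb : ∀ t : ℕ, T ≤ t → b / ((t : ℝ) + 1) ^ 2 ≤ c / ((t : ℝ) + 1) * (ε / 2) := by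
      intro t ht
      have ht' : (T : ℝ) ≤ t := Nat.cast_le.2 ht
      have h1 : 2 * b / (c * ε) ≤ (t : ℝ) + 1 := by linarith
      rw [div_le_iff₀ (by positivity)] at h1
      have hpos : (0 : ℝ) < (t : ℝ) + 1 := by positivity
      rw [div_le_iff₀ (by positivity), div_mul_eq_mul_div, div_mul_eq_mul_div,
        le_div_iff₀ hpos]
      nlinarith
    -- once below ε (past T), stays below ε
    have stay : ∀ t : ℕ, T ≤ t → X t ≤ ε → X (t + 1) ≤ ε := by
      intro t ht hxt
      have h1 := hrec t
      have h2 := hbb t ht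
      have h3 := hq t ht
      have h4 := hqpos t
      nlinarith [hX t]
    -- eventually drops below ε
    have drop : ∃ t, T ≤ t ∧ X t ≤ ε := by
      by_contra hcon
      push_neg at hcon
      have desc : ∀ t : ℕ, T ≤ t → X (t + 1) ≤ X t - c / ((t : ℝ) + 1) * (ε / 2) := by
        intro t ht
        have h1 := hrec t
        have h2 := hbb t ht
        have h4 := hqpos t
        have h5 := hcon t ht
        nlinarith
      set H : ℕ → ℝ := fun n => ∑ i ∈ Finset.range n, 1 / ((i : ℝ) + 1) with hH
      have claim : ∀ n : ℕ, X (T + n) ≤ X T - c * ε / 2 * (H (T + n) - H T) := by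
        intro n
        induction n with
        | zero => simp
        | succ n ih =>
          have hd := desc (T + n) (Nat.le_add_right _ _)
          have hHs : H (T + n + 1) = H (T + n) + 1 / (((T + n : ℕ) : ℝ) + 1) := by
            simp only [hH]
            exact Finset.sum_range_succ _ (T + n)
          have heq : c / (((T + n : ℕ) : ℝ) + 1) * (ε / 2)
              = c * ε / 2 * (1 / (((T + n : ℕ) : ℝ) + 1)) := by
            field_simp
          show X (T + n + 1) ≤ X T - c * ε / 2 * (H (T + n + 1) - H T)
          rw [hHs]
          linarith
      -- H tends to infinity
      have hHtop : Filter.Tendsto H Filter.atTop Filter.atTop :=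
        Real.tendsto_sum_range_one_div_nat_succ_atTop
      obtain ⟨m₁, hm₁⟩ := Filter.eventually_atTop.mp
        (Filter.tendsto_atTop.mp hHtop (H T + X T / (c * ε / 2) + 1))
      have hm := hm₁ (max T m₁) (le_max_right _ _)
      have hmT : T ≤ max T m₁ := le_max_left _ _
      have hc2 : (0 : ℝ) < c * ε / 2 := by positivity
      have h1 := claim (max T m₁ - T)
      rw [Nat.add_sub_cancel' hmT] at h1
      have h2 : c * ε / 2 * (X T / (c * ε / 2) + 1) ≤ c * ε / 2 * (H (max T m₁) - H T) := by
        apply mul_le_mul_of_nonneg_left _ hc2.le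
        linarith
      have hXT : c * ε / 2 * (X T / (c * ε / 2) + 1) = X T + c * ε / 2 := by
        field_simp
      have h0 := hX (max T m₁)
      linarith
    obtain ⟨t₀, ht₀T, ht₀⟩ := drop
    refine ⟨t₀, fun t ht => ?_⟩
    induction t, ht using Nat.le_induction with
    | base => exact ht₀
    | succ t ht ih => exact stay t (le_trans ht₀T ht) ih
  rw [Metric.tendsto_atTop]
  intro ε hε
  obtain ⟨N, hN⟩ := key (ε / 2) (by linarith)
  refine ⟨N, fun t ht => ?_⟩
  rw [Real.dist_eq, sub_zero, abs_of_nonneg (hX t)]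
  linarith [hN t ht]
end

section
/- Let S be a finite set, P : S × S → ℝ row-stochastic, γ ∈ [0,1), and r : S → ℝ with |r(s)| ≤ r_max. Let v : S × ℝ^p → ℝ be differentiable in its second argument and θ* ∈ ℝ^p be such that: (i) ‖∇_θ v(s,θ)‖ ≤ l for all s and θ; (ii) |v(s,θ) − v(s,θ*)| ≤ l‖θ − θ*‖ for all s and θ; (iii) v(s,θ*) = r(s) + γ Σ_{s''} P(s,s'') v(s'',θ*) for all s. Then for all θ ∈ ℝ^p and all states s, s' ∈ S, the TD update direction satisfies ‖∇_θ v(s,θ) · (r(s) + γ v(s',θ) − v(s,θ))‖² ≤ 3(1+γ²) l⁴ ‖θ − θ*‖² + 12 γ² l² r_max² / (1−γ)². -/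
/-!
The Bellman equation makes `v(·, θ*)` a fixed point of a `γ`-contraction in the sup norm, so
`|v(s, θ*)| ≤ r_max / (1 - γ)`. Using the Bellman equation once more, the TD error splits as
`(v(s,θ*) - v(s,θ)) + γ (v(s',θ) - v(s',θ*)) + γ (v(s',θ*) - Σ P(s,·) v(·,θ*))`:
the first two terms are controlled by the Lipschitz bound, the last by `2 r_max / (1 - γ)`.
Then `(a + b + c)² ≤ 3 (a² + b² + c²)` and `‖∇v‖ ≤ l` give the bound.
-/

open Finset

lemma sq_le_three_mul_of_abs_le_add_add {x a b c : ℝ} (h : |x| ≤ a + b + c) :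
    x ^ 2 ≤ 3 * (a ^ 2 + b ^ 2 + c ^ 2) := by
  have hsq : x ^ 2 ≤ (a + b + c) ^ 2 := by
    rw [← sq_abs]
    exact pow_le_pow_left₀ (abs_nonneg x) h 2
  nlinarith [sq_nonneg (a - b), sq_nonneg (b - c), sq_nonneg (a - c)]

section Stochastic

variable {S : Type*} [Fintype S] {P : S → S → ℝ}

lemma abs_stochastic_sum_le (hP0 : ∀ s s', 0 ≤ P s s') (hP1 : ∀ s, ∑ s', P s s' = 1)
    {f : S → ℝ} {M : ℝ} (hf : ∀ t, |f t| ≤ M) (s : S) :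
    |∑ s', P s s' * f s'| ≤ M :=
  calc |∑ s', P s s' * f s'| ≤ ∑ s', |P s s' * f s'| := abs_sum_le_sum_abs _ _
    _ ≤ ∑ s', P s s' * M := by
        gcongr with t
        rw [abs_mul, abs_of_nonneg (hP0 s t)]
        exact mul_le_mul_of_nonneg_left (hf t) (hP0 s t)
    _ = M := by rw [← sum_mul, hP1 s, one_mul]

lemma abs_le_of_bellman (hP0 : ∀ s s', 0 ≤ P s s') (hP1 : ∀ s, ∑ s', P s s' = 1)
    {γ : ℝ} (hγ0 : 0 ≤ γ) (hγ1 : γ < 1) {r V : S → ℝ} {rmax : ℝ} (hr : ∀ s, |r s| ≤ rmax)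
    (hV : ∀ s, V s = r s + γ * ∑ s', P s s' * V s') (s : S) :
    |V s| ≤ rmax / (1 - γ) := by
  have : Nonempty S := ⟨s⟩
  obtain ⟨t, ht⟩ := Finite.exists_max fun u => |V u|
  have hrec : |V t| ≤ rmax + γ * |V t| :=
    calc |V t| ≤ |r t| + |γ * ∑ s', P t s' * V s'| := by rw [hV t]; exact abs_add_le _ _
      _ ≤ rmax + γ * |V t| := by
          rw [abs_mul, abs_of_nonneg hγ0]
          exact add_le_add (hr t)
            (mul_le_mul_of_nonneg_left (abs_stochastic_sum_le hP0 hP1 ht t) hγ0)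
  rw [le_div_iff₀ (by linarith)]
  nlinarith [ht s]

end Stochastic

lemma abs_td_error_le {S E : Type*} [Fintype S] [SeminormedAddCommGroup E]
    {P : S → S → ℝ} (hP0 : ∀ s s', 0 ≤ P s s') (hP1 : ∀ s, ∑ s', P s s' = 1)
    {γ : ℝ} (hγ0 : 0 ≤ γ) {r : S → ℝ} {l B : ℝ} {v : S → E → ℝ} {θstar : E}
    (hlip : ∀ s θ, |v s θ - v s θstar| ≤ l * ‖θ - θstar‖)
    (hbellman : ∀ s, v s θstar = r s + γ * ∑ s'', P s s'' * v s'' θstar)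
    (hB : ∀ s, |v s θstar| ≤ B) (θ : E) (s s' : S) :
    |r s + γ * v s' θ - v s θ|
      ≤ l * ‖θ - θstar‖ + γ * (l * ‖θ - θstar‖) + γ * (2 * B) := by
  have hdecomp : r s + γ * v s' θ - v s θ = (v s θstar - v s θ) + γ * (v s' θ - v s' θstar)
      + γ * (v s' θstar - ∑ s'', P s s'' * v s'' θstar) := by
    rw [hbellman s]; ring
  have hmean : |v s' θstar - ∑ s'', P s s'' * v s'' θstar| ≤ 2 * B := by
    linarith [abs_sub (v s' θstar) (∑ s'', P s s'' * v s'' θstar), hB s',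
      abs_stochastic_sum_le hP0 hP1 hB s]
  rw [hdecomp]
  refine (abs_add_le _ _).trans (add_le_add ((abs_add_le _ _).trans (add_le_add ?_ ?_)) ?_)
  · rw [abs_sub_comm]; exact hlip s θ
  · rw [abs_mul, abs_of_nonneg hγ0]; exact mul_le_mul_of_nonneg_left (hlip s' θ) hγ0
  · rw [abs_mul, abs_of_nonneg hγ0]; exact mul_le_mul_of_nonneg_left hmean hγ0

theorem stmt16_general {S : Type*} [Fintype S] {p : ℕ}
    (P : S → S → ℝ) (hPnonneg : ∀ s s', 0 ≤ P s s') (hProw : ∀ s, ∑ s', P s s' = 1)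
    (γ : ℝ) (hγ0 : 0 ≤ γ) (hγ1 : γ < 1)
    (r : S → ℝ) (rmax : ℝ) (hr : ∀ s, |r s| ≤ rmax)
    (l : ℝ)
    (v : S → EuclideanSpace ℝ (Fin p) → ℝ)
    (θstar : EuclideanSpace ℝ (Fin p))
    (hgrad : ∀ s θ, ‖gradient (v s) θ‖ ≤ l)
    (hlip : ∀ s θ, |v s θ - v s θstar| ≤ l * ‖θ - θstar‖)
    (hbellman : ∀ s, v s θstar = r s + γ * ∑ s'', P s s'' * v s'' θstar) :
    ∀ (θ : EuclideanSpace ℝ (Fin p)) (s s' : S),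
      ‖(r s + γ * v s' θ - v s θ) • gradient (v s) θ‖ ^ 2
        ≤ 3 * (1 + γ ^ 2) * l ^ 4 * ‖θ - θstar‖ ^ 2
          + 12 * γ ^ 2 * l ^ 2 * rmax ^ 2 / (1 - γ) ^ 2 := by
  intro θ s s'
  have hB := abs_le_of_bellman hPnonneg hProw hγ0 hγ1 hr hbellman
  have hδ := sq_le_three_mul_of_abs_le_add_add
    (abs_td_error_le hPnonneg hProw hγ0 hlip hbellman hB θ s s')
  have hg : ‖gradient (v s) θ‖ ^ 2 ≤ l ^ 2 := pow_le_pow_left₀ (norm_nonneg _) (hgrad s θ) 2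
  have h1γ : (1 - γ) ^ 2 ≠ 0 := by nlinarith
  calc ‖(r s + γ * v s' θ - v s θ) • gradient (v s) θ‖ ^ 2
      = (r s + γ * v s' θ - v s θ) ^ 2 * ‖gradient (v s) θ‖ ^ 2 := by
        rw [norm_smul, mul_pow, Real.norm_eq_abs, sq_abs]
    _ ≤ 3 * ((l * ‖θ - θstar‖) ^ 2 + (γ * (l * ‖θ - θstar‖)) ^ 2
          + (γ * (2 * (rmax / (1 - γ)))) ^ 2) * l ^ 2 :=
        mul_le_mul hδ hg (sq_nonneg _) (by positivity)
    _ = _ := by field_simp; ring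

/-- Bound on the TD update direction: if the gradients of `v` are bounded by `l`, `v` is
`l`-Lipschitz towards `θ*`, and `θ*` solves the Bellman equation, then
`‖∇_θ v(s,θ) (r(s) + γ v(s',θ) − v(s,θ))‖² ≤ 3(1+γ²)l⁴‖θ−θ*‖² + 12γ²l²r_max²/(1−γ)²`. -/
theorem stmt16 {S : Type*} [Fintype S] {p : ℕ}
    (P : S → S → ℝ) (hPnonneg : ∀ s s', 0 ≤ P s s') (hProw : ∀ s, ∑ s', P s s' = 1)
    (γ : ℝ) (hγ0 : 0 ≤ γ) (hγ1 : γ < 1)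
    (r : S → ℝ) (rmax : ℝ) (hrmax : 0 ≤ rmax) (hr : ∀ s, |r s| ≤ rmax)
    (l : ℝ) (hl : 0 ≤ l)
    (v : S → EuclideanSpace ℝ (Fin p) → ℝ)
    (hdiff : ∀ s, Differentiable ℝ (v s))
    (θstar : EuclideanSpace ℝ (Fin p))
    (hgrad : ∀ s θ, ‖gradient (v s) θ‖ ≤ l)
    (hlip : ∀ s θ, |v s θ - v s θstar| ≤ l * ‖θ - θstar‖)
    (hbellman : ∀ s, v s θstar = r s + γ * ∑ s'', P s s'' * v s'' θstar) :
    ∀ (θ : EuclideanSpace ℝ (Fin p)) (s s' : S),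
      ‖(r s + γ * v s' θ - v s θ) • gradient (v s) θ‖ ^ 2
        ≤ 3 * (1 + γ ^ 2) * l ^ 4 * ‖θ - θstar‖ ^ 2
          + 12 * γ ^ 2 * l ^ 2 * rmax ^ 2 / (1 - γ) ^ 2 :=
  stmt16_general P hPnonneg hProw γ hγ0 hγ1 r rmax hr l v θstar hgrad hlip hbellman
end

section
/- Let each state s ∈ S be represented by a vector in ℝ^d with ‖s‖ ≤ 1, let V(θ) ∈ ℝ^S be the vector with entries V(s,θ) given by the one-hidden-layer network, let J(θ) denote the Jacobian of θ ↦ V(θ), fix θ* ∈ (ℝ^d)^m, and set σ* = σ_min^{2,D}(J(θ*)) = inf_{x ≠ 0} ‖J(θ*)x‖_D / ‖x‖. Then for every θ ∈ (ℝ^d)^m: (θ − θ*)^T J(θ)^T D (γP − I) (V(θ) − V(θ*)) ≤ −(1−γ) σ*² ‖θ − θ*‖² + 2(1+γ) c0 l m^{−1/2} ‖θ − θ*‖³. -/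
/-!
Write `z = θ - θ*` and `B(f, g) = ⟨f, (γP - I) g⟩_D`. Since both marginals of the weights
`μ(s) P(s, s')` equal `μ`, Cauchy–Schwarz gives `|⟨f, P g⟩_D| ≤ ‖f‖_D ‖g‖_D`, hence
`B(f, f) ≤ -(1 - γ) ‖f‖_D²` and `|B(f, g)| ≤ (1 + γ) ‖f‖_D ‖g‖_D`. By bilinearity
`B(J(θ) z, Δ) = B(J(θ*) z, J(θ*) z) + B(J(θ) z - J(θ*) z, Δ) + B(J(θ*) z, Δ - J(θ*) z)` with
`Δ = V(θ) - V(θ*)`, and the first term is at most `-(1 - γ) σ*² ‖z‖²`. Neuron by neuron, the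
Lipschitz bound on `σ` gives `‖Δ‖_D, ‖J(θ*) z‖_D ≤ l ‖z‖` (the factor `m^{-1/2}` absorbs
`∑_r ‖z_r‖ ≤ √m ‖z‖`, where `z_r` are the weights of neuron `r`), and the smoothness of `σ` gives
`‖J(θ) z - J(θ*) z‖_D, ‖Δ - J(θ*) z‖_D ≤ c0 m^{-1/2} ‖z‖²` (using `∑_r ‖z_r‖² = ‖z‖²`).
-/

open Finset

noncomputable def weightedNorm {ι : Type*} [Fintype ι] (w f : ι → ℝ) : ℝ :=
  √(∑ i, w i * f i ^ 2)

section WeightedNorm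

variable {ι : Type*} [Fintype ι] {w : ι → ℝ}

theorem weightedNorm_nonneg (w f : ι → ℝ) : 0 ≤ weightedNorm w f :=
  Real.sqrt_nonneg _

theorem weightedNorm_sq (hw : ∀ i, 0 ≤ w i) (f : ι → ℝ) :
    weightedNorm w f ^ 2 = ∑ i, w i * f i ^ 2 :=
  Real.sq_sqrt (sum_nonneg fun i _ => mul_nonneg (hw i) (sq_nonneg _))

theorem abs_sum_mul_mul_le_weightedNorm (hw : ∀ i, 0 ≤ w i) (f g : ι → ℝ) :
    |∑ i, w i * f i * g i| ≤ weightedNorm w f * weightedNorm w g := by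
  rw [weightedNorm, weightedNorm,
    ← Real.sqrt_mul (sum_nonneg fun i _ => mul_nonneg (hw i) (sq_nonneg _))]
  exact Real.abs_le_sqrt <| sum_sq_le_sum_mul_sum_of_sq_le_mul _
    (fun i _ => mul_nonneg (hw i) (sq_nonneg _)) (fun i _ => mul_nonneg (hw i) (sq_nonneg _))
    fun i _ => le_of_eq (by ring)

theorem weightedNorm_le_of_abs_le (hw : ∀ i, 0 ≤ w i) (hw₁ : ∑ i, w i = 1) {f : ι → ℝ} {M : ℝ}
    (hM : 0 ≤ M) (hf : ∀ i, |f i| ≤ M) : weightedNorm w f ≤ M := by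
  rw [weightedNorm, Real.sqrt_le_left hM]
  calc ∑ i, w i * f i ^ 2 ≤ ∑ i, w i * M ^ 2 :=
        sum_le_sum fun i _ => mul_le_mul_of_nonneg_left
          (sq_le_sq.2 ((hf i).trans (le_abs_self M))) (hw i)
    _ = M ^ 2 := by rw [← sum_mul, hw₁, one_mul]

end WeightedNorm

section Markov

variable {S : Type*} [Fintype S] {P : S → S → ℝ} {μ : S → ℝ}

theorem sum_sum_mul_sq_left (hProw : ∀ s, ∑ s', P s s' = 1) (g : S → ℝ) :
    ∑ s, ∑ s', μ s * P s s' * g s ^ 2 = ∑ s, μ s * g s ^ 2 :=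
  sum_congr rfl fun s _ => by
    rw [← sum_mul, ← mul_sum, hProw, mul_one]

theorem sum_sum_mul_sq_right (hstat : ∀ s', ∑ s, μ s * P s s' = μ s') (g : S → ℝ) :
    ∑ s, ∑ s', μ s * P s s' * g s' ^ 2 = ∑ s, μ s * g s ^ 2 := by
  rw [sum_comm]
  exact sum_congr rfl fun s' _ => by rw [← sum_mul, hstat]

theorem abs_sum_sum_mul_le_weightedNorm (hP : ∀ s s', 0 ≤ P s s') (hμ : ∀ s, 0 ≤ μ s)
    (hProw : ∀ s, ∑ s', P s s' = 1) (hstat : ∀ s', ∑ s, μ s * P s s' = μ s') (f g : S → ℝ) :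
    |∑ s, ∑ s', μ s * P s s' * f s * g s'| ≤ weightedNorm μ f * weightedNorm μ g := by
  have h := abs_sum_mul_mul_le_weightedNorm (w := fun p : S × S => μ p.1 * P p.1 p.2)
    (fun p => mul_nonneg (hμ p.1) (hP p.1 p.2)) (fun p => f p.1) (fun p => g p.2)
  simp only [weightedNorm, Fintype.sum_prod_type] at h
  rwa [sum_sum_mul_sq_left hProw, sum_sum_mul_sq_right hstat] at h

end Markov

/-- `⟨f, (γP - I) g⟩_D`. -/
noncomputable def bellmanForm {S : Type*} [Fintype S] (P : S → S → ℝ) (μ : S → ℝ) (γ : ℝ)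
    (f g : S → ℝ) : ℝ :=
  γ * ∑ s, ∑ s', μ s * P s s' * f s * g s' - ∑ s, μ s * f s * g s

section BellmanForm

variable {S : Type*} [Fintype S] {P : S → S → ℝ} {μ : S → ℝ} {γ : ℝ}

theorem bellmanForm_eq_add (f f₀ g : S → ℝ) :
    bellmanForm P μ γ f g =
      bellmanForm P μ γ f₀ f₀ + bellmanForm P μ γ (f - f₀) g + bellmanForm P μ γ f₀ (g - f₀) := by
  simp only [bellmanForm, Pi.sub_apply, mul_sub, sub_mul, sum_sub_distrib]
  ring

variable (hP : ∀ s s', 0 ≤ P s s') (hμ : ∀ s, 0 ≤ μ s) (hProw : ∀ s, ∑ s', P s s' = 1)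
  (hstat : ∀ s', ∑ s, μ s * P s s' = μ s') (hγ : 0 ≤ γ)
include hP hμ hProw hstat hγ

theorem bellmanForm_self_le (f : S → ℝ) :
    bellmanForm P μ γ f f ≤ -((1 - γ) * weightedNorm μ f ^ 2) := by
  have hPf := (abs_le.1 (abs_sum_sum_mul_le_weightedNorm hP hμ hProw hstat f f)).2
  have hf : ∑ s, μ s * f s * f s = weightedNorm μ f ^ 2 := by
    rw [weightedNorm_sq hμ]; exact sum_congr rfl fun s _ => by ring
  rw [bellmanForm, hf]
  nlinarith

theorem bellmanForm_le_mul (f g : S → ℝ) :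
    bellmanForm P μ γ f g ≤ (1 + γ) * (weightedNorm μ f * weightedNorm μ g) := by
  have hPfg := abs_le.1 (abs_sum_sum_mul_le_weightedNorm hP hμ hProw hstat f g)
  have hfg := abs_le.1 (abs_sum_mul_mul_le_weightedNorm hμ f g)
  rw [bellmanForm]
  nlinarith

theorem bellmanForm_le (f f₀ g : S → ℝ) :
    bellmanForm P μ γ f g ≤ -((1 - γ) * weightedNorm μ f₀ ^ 2) +
      (1 + γ) * (weightedNorm μ (f - f₀) * weightedNorm μ g +
        weightedNorm μ f₀ * weightedNorm μ (g - f₀)) := by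
  rw [bellmanForm_eq_add f f₀ g]
  linarith [bellmanForm_self_le hP hμ hProw hstat hγ f₀,
    bellmanForm_le_mul hP hμ hProw hstat hγ (f - f₀) g,
    bellmanForm_le_mul hP hμ hProw hstat hγ f₀ (g - f₀)]

end BellmanForm

section Activation

variable {f : ℝ → ℝ} {K : ℝ}

theorem nonneg_of_abs_sub_le_mul (h : ∀ u v, |f u - f v| ≤ K * |u - v|) : 0 ≤ K := by
  simpa using (abs_nonneg _).trans (h 1 0)

theorem abs_deriv_le_of_abs_sub_le_mul (h : ∀ u v, |f u - f v| ≤ K * |u - v|) (x : ℝ) :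
    |deriv f x| ≤ K := by
  have hK := nonneg_of_abs_sub_le_mul h
  have hlip : LipschitzWith ⟨K, hK⟩ f :=
    LipschitzWith.of_dist_le_mul fun u v => by rw [Real.dist_eq, Real.dist_eq]; exact h u v
  exact norm_deriv_le_of_lipschitz hlip

theorem abs_sub_sub_deriv_mul_le (hf : Differentiable ℝ f)
    (h : ∀ u v, |deriv f u - deriv f v| ≤ K * |u - v|) (x y : ℝ) :
    |f y - f x - deriv f x * (y - x)| ≤ K * (y - x) ^ 2 := by
  have hK := nonneg_of_abs_sub_le_mul h
  have hg : ∀ t, HasDerivAt (fun t => f t - deriv f x * t) (deriv f t - deriv f x) t := fun t => by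
    simpa using (hf t).hasDerivAt.fun_sub ((hasDerivAt_id t).const_mul (deriv f x))
  have := Convex.norm_image_sub_le_of_norm_deriv_le (C := K * |y - x|)
    (fun t _ => (hg t).differentiableAt)
    (fun t ht => by
      rw [(hg t).deriv]
      exact (h t x).trans (mul_le_mul_of_nonneg_left (Set.abs_sub_left_of_mem_uIcc ht) hK))
    (convex_uIcc x y) Set.left_mem_uIcc Set.right_mem_uIcc
  calc |f y - f x - deriv f x * (y - x)| = ‖f y - deriv f x * y - (f x - deriv f x * x)‖ := by
        rw [Real.norm_eq_abs]; ring_nf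
    _ ≤ K * |y - x| * ‖y - x‖ := this
    _ = K * (y - x) ^ 2 := by rw [Real.norm_eq_abs, mul_assoc, abs_mul_abs_self, sq]

end Activation

noncomputable def rowNorm {ι κ : Type*} [Fintype κ] (z : EuclideanSpace ℝ (ι × κ)) (r : ι) : ℝ :=
  √(∑ j, z (r, j) ^ 2)

section RowNorm

variable {ι κ : Type*} [Fintype κ]

theorem abs_sum_mul_le_rowNorm (z : EuclideanSpace ℝ (ι × κ)) (r : ι) {e : EuclideanSpace ℝ κ}
    (he : ‖e‖ ≤ 1) : |∑ j, z (r, j) * e j| ≤ rowNorm z r := by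
  have h := sum_mul_sq_le_sq_mul_sq univ (fun j => z (r, j)) e
  rw [← EuclideanSpace.real_norm_sq_eq] at h
  refine Real.abs_le_sqrt (h.trans ?_)
  exact mul_le_of_le_one_right (sum_nonneg fun j _ => sq_nonneg _)
    (pow_le_one₀ (norm_nonneg e) he)

theorem sum_mul_sub_sum_mul (θ θ' : EuclideanSpace ℝ (ι × κ)) (e : κ → ℝ) (r : ι) :
    ∑ j, θ (r, j) * e j - ∑ j, θ' (r, j) * e j = ∑ j, (θ - θ') (r, j) * e j := by
  simp only [PiLp.sub_apply, sub_mul, sum_sub_distrib]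

variable [Fintype ι]

theorem sum_rowNorm_sq (z : EuclideanSpace ℝ (ι × κ)) : ∑ r, rowNorm z r ^ 2 = ‖z‖ ^ 2 := by
  simp only [rowNorm, EuclideanSpace.real_norm_sq_eq, Fintype.sum_prod_type]
  exact sum_congr rfl fun r _ => Real.sq_sqrt (sum_nonneg fun j _ => sq_nonneg _)

theorem sum_rowNorm_le (z : EuclideanSpace ℝ (ι × κ)) :
    ∑ r, rowNorm z r ≤ √(Fintype.card ι) * ‖z‖ := by
  have h := sum_mul_sq_le_sq_mul_sq univ (fun _ => (1 : ℝ)) (rowNorm z)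
  simp only [one_mul, one_pow, sum_const, card_univ, nsmul_eq_mul, mul_one, sum_rowNorm_sq] at h
  rw [← Real.sqrt_sq (norm_nonneg z), ← Real.sqrt_mul (Nat.cast_nonneg _)]
  exact (le_abs_self _).trans (Real.abs_le_sqrt h)

end RowNorm

theorem abs_mul_sum_mul_le {ι : Type*} [Fintype ι] {c : ℝ} (hc : 0 ≤ c) {b t w : ι → ℝ}
    (hb : ∀ r, |b r| ≤ 1) (ht : ∀ r, |t r| ≤ w r) : |c * ∑ r, b r * t r| ≤ c * ∑ r, w r := by
  rw [abs_mul, abs_of_nonneg hc]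
  refine mul_le_mul_of_nonneg_left ((abs_sum_le_sum_abs _ _).trans (sum_le_sum fun r _ => ?_)) hc
  rw [abs_mul]
  exact (mul_le_of_le_one_left (abs_nonneg _) (hb r)).trans (ht r)

theorem one_div_sqrt_mul_sum_rowNorm_le {m : ℕ} {κ : Type*} [Fintype κ] {K : ℝ} (hK : 0 ≤ K)
    (z : EuclideanSpace ℝ (Fin m × κ)) : 1 / √m * ∑ r, K * rowNorm z r ≤ K * ‖z‖ := by
  have h := sum_rowNorm_le z
  rw [Fintype.card_fin] at h
  calc 1 / √m * ∑ r, K * rowNorm z r = K * ((√m)⁻¹ * ∑ r, rowNorm z r) := by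
        rw [← mul_sum, one_div]; ring
    _ ≤ K * ((√m)⁻¹ * √m * ‖z‖) := by rw [mul_assoc]; gcongr
    _ ≤ K * ‖z‖ := by
        gcongr
        exact mul_le_of_le_one_left (norm_nonneg z)
          (inv_mul_le_one_of_le₀ le_rfl (Real.sqrt_nonneg _))

theorem one_div_sqrt_mul_sum_rowNorm_sq {m : ℕ} {κ : Type*} [Fintype κ] (K : ℝ)
    (z : EuclideanSpace ℝ (Fin m × κ)) : 1 / √m * ∑ r, K * rowNorm z r ^ 2 = K / √m * ‖z‖ ^ 2 := by
  rw [← mul_sum, sum_rowNorm_sq]; ring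

theorem iInf_div_norm_sq_mul_sq_le {E : Type*} [NormedAddCommGroup E] {F : E → ℝ}
    (hF : ∀ x, 0 ≤ F x) (z : E) :
    (⨅ x : {x : E // x ≠ 0}, F x.1 / ‖x.1‖) ^ 2 * ‖z‖ ^ 2 ≤ F z ^ 2 := by
  rw [← mul_pow]
  have hinf : 0 ≤ ⨅ x : {x : E // x ≠ 0}, F x.1 / ‖x.1‖ :=
    Real.iInf_nonneg fun x => div_nonneg (hF x.1) (norm_nonneg _)
  refine pow_le_pow_left₀ (mul_nonneg hinf (norm_nonneg z)) ?_ 2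
  rcases eq_or_ne z 0 with rfl | hz
  · simpa using hF 0
  · rw [← le_div_iff₀ (norm_pos_iff.2 hz)]
    refine ciInf_le ⟨0, ?_⟩ (⟨z, hz⟩ : {x : E // x ≠ 0})
    rintro _ ⟨x, rfl⟩
    exact div_nonneg (hF x.1) (norm_nonneg _)

theorem fderiv_network_apply {S : Type*} [Fintype S] {d m : ℕ} {σ : ℝ → ℝ} {b : Fin m → ℝ}
    {emb : S → EuclideanSpace ℝ (Fin d)} {V : EuclideanSpace ℝ (Fin m × Fin d) → EuclideanSpace ℝ S}
    {c : ℝ} (hσ : Differentiable ℝ σ)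
    (hV : ∀ θ s, V θ s = c * ∑ r, b r * σ (∑ j, θ (r, j) * emb s j))
    (θ u : EuclideanSpace ℝ (Fin m × Fin d)) (s : S) :
    fderiv ℝ V θ u s =
      c * ∑ r, b r * (deriv σ (∑ j, θ (r, j) * emb s j) * ∑ j, u (r, j) * emb s j) := by
  have hpre : ∀ s r,
      HasFDerivAt (fun θ : EuclideanSpace ℝ (Fin m × Fin d) => ∑ j, θ (r, j) * emb s j)
      (∑ j, emb s j • PiLp.proj (𝕜 := ℝ) 2 (fun _ : Fin m × Fin d => ℝ) (r, j)) θ := fun s r =>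
    HasFDerivAt.fun_sum fun j _ =>
      (PiLp.hasFDerivAt_apply (𝕜 := ℝ) (E := fun _ => ℝ) 2 θ (r, j)).mul_const (emb s j)
  have hcoord : ∀ s, HasFDerivAt (fun θ => V θ s)
      (c • ∑ r, b r • deriv σ (∑ j, θ (r, j) * emb s j) •
        ∑ j, emb s j • PiLp.proj (𝕜 := ℝ) 2 (fun _ : Fin m × Fin d => ℝ) (r, j)) θ := fun s => by
    simp only [hV]
    exact (HasFDerivAt.fun_sum fun r _ =>
      ((hσ _).hasDerivAt.comp_hasFDerivAt θ (hpre s r)).const_mul (b r)).const_mul c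
  have hV' : DifferentiableAt ℝ V θ :=
    differentiableAt_euclidean.2 fun s => (hcoord s).differentiableAt
  have hproj : HasFDerivAt (fun θ => V θ s)
      ((PiLp.proj (𝕜 := ℝ) 2 (fun _ : S => ℝ) s).comp (fderiv ℝ V θ)) θ :=
    (PiLp.hasFDerivAt_apply (𝕜 := ℝ) (E := fun _ : S => ℝ) 2 (V θ) s).comp θ hV'.hasFDerivAt
  have h := congrArg (fun L => L u) (hproj.unique (hcoord s))
  simp only [ContinuousLinearMap.comp_apply, PiLp.proj_apply] at h
  rw [h]
  simp [mul_sum, mul_comm]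

section Network

variable {S : Type*} {d m : ℕ} {σ : ℝ → ℝ} {l c0 : ℝ} {b : Fin m → ℝ}
  {emb : S → EuclideanSpace ℝ (Fin d)} {V : EuclideanSpace ℝ (Fin m × Fin d) → EuclideanSpace ℝ S}
  (hb : ∀ r, |b r| ≤ 1) (hemb : ∀ s, ‖emb s‖ ≤ 1)
  (hV : ∀ θ s, V θ s = (1 / √m) * ∑ r, b r * σ (∑ j, θ (r, j) * emb s j))
include hb hemb hV

theorem abs_network_sub_le (hσlip : ∀ u v, |σ u - σ v| ≤ l * |u - v|)
    (θ θ' : EuclideanSpace ℝ (Fin m × Fin d)) (s : S) :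
    |(V θ - V θ') s| ≤ l * ‖θ - θ'‖ := by
  have hl := nonneg_of_abs_sub_le_mul hσlip
  calc |(V θ - V θ') s|
      = |1 / √m * ∑ r, b r * (σ (∑ j, θ (r, j) * emb s j) - σ (∑ j, θ' (r, j) * emb s j))| := by
        simp only [PiLp.sub_apply, hV, mul_sub, sum_sub_distrib]
    _ ≤ 1 / √m * ∑ r, l * rowNorm (θ - θ') r := abs_mul_sum_mul_le (by positivity) hb fun r => by
        refine (hσlip _ _).trans (mul_le_mul_of_nonneg_left ?_ hl)
        rw [sum_mul_sub_sum_mul]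
        exact abs_sum_mul_le_rowNorm _ r (hemb s)
    _ ≤ l * ‖θ - θ'‖ := one_div_sqrt_mul_sum_rowNorm_le hl _

variable [Fintype S]

theorem abs_fderiv_network_le (hσ : Differentiable ℝ σ)
    (hσlip : ∀ u v, |σ u - σ v| ≤ l * |u - v|) (θ z : EuclideanSpace ℝ (Fin m × Fin d)) (s : S) :
    |fderiv ℝ V θ z s| ≤ l * ‖z‖ := by
  have hl := nonneg_of_abs_sub_le_mul hσlip
  rw [fderiv_network_apply hσ hV]
  refine (abs_mul_sum_mul_le (by positivity) hb fun r => ?_).trans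
    (one_div_sqrt_mul_sum_rowNorm_le hl z)
  rw [abs_mul]
  exact mul_le_mul (abs_deriv_le_of_abs_sub_le_mul hσlip _) (abs_sum_mul_le_rowNorm z r (hemb s))
    (abs_nonneg _) hl

theorem abs_fderiv_network_sub_le (hσ : Differentiable ℝ σ)
    (hσsmooth : ∀ u v, |deriv σ u - deriv σ v| ≤ c0 * |u - v|)
    (θ θ' : EuclideanSpace ℝ (Fin m × Fin d)) (s : S) :
    |fderiv ℝ V θ (θ - θ') s - fderiv ℝ V θ' (θ - θ') s| ≤ c0 / √m * ‖θ - θ'‖ ^ 2 := by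
  have hc0 := nonneg_of_abs_sub_le_mul hσsmooth
  calc |fderiv ℝ V θ (θ - θ') s - fderiv ℝ V θ' (θ - θ') s|
      = |1 / √m * ∑ r, b r * ((deriv σ (∑ j, θ (r, j) * emb s j)
          - deriv σ (∑ j, θ' (r, j) * emb s j)) * ∑ j, (θ - θ') (r, j) * emb s j)| := by
        simp only [fderiv_network_apply hσ hV, ← mul_sub, ← sum_sub_distrib, sub_mul]
    _ ≤ 1 / √m * ∑ r, c0 * rowNorm (θ - θ') r ^ 2 :=
      abs_mul_sum_mul_le (by positivity) hb fun r => by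
        have hδ := abs_sum_mul_le_rowNorm (θ - θ') r (hemb s)
        rw [abs_mul, sq, ← mul_assoc]
        refine mul_le_mul ((hσsmooth _ _).trans (mul_le_mul_of_nonneg_left ?_ hc0)) hδ
          (abs_nonneg _) (mul_nonneg hc0 (Real.sqrt_nonneg _))
        rwa [sum_mul_sub_sum_mul]
    _ = c0 / √m * ‖θ - θ'‖ ^ 2 := one_div_sqrt_mul_sum_rowNorm_sq c0 _

theorem abs_network_sub_sub_fderiv_le (hσ : Differentiable ℝ σ)
    (hσsmooth : ∀ u v, |deriv σ u - deriv σ v| ≤ c0 * |u - v|)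
    (θ θ' : EuclideanSpace ℝ (Fin m × Fin d)) (s : S) :
    |(V θ - V θ') s - fderiv ℝ V θ' (θ - θ') s| ≤ c0 / √m * ‖θ - θ'‖ ^ 2 := by
  have hc0 := nonneg_of_abs_sub_le_mul hσsmooth
  calc |(V θ - V θ') s - fderiv ℝ V θ' (θ - θ') s|
      = |1 / √m * ∑ r, b r * (σ (∑ j, θ (r, j) * emb s j) - σ (∑ j, θ' (r, j) * emb s j)
          - deriv σ (∑ j, θ' (r, j) * emb s j) * ∑ j, (θ - θ') (r, j) * emb s j)| := by
        simp only [PiLp.sub_apply, hV, fderiv_network_apply hσ hV, ← mul_sub, ← sum_sub_distrib]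
    _ ≤ 1 / √m * ∑ r, c0 * rowNorm (θ - θ') r ^ 2 :=
      abs_mul_sum_mul_le (by positivity) hb fun r => by
        have h := abs_sub_sub_deriv_mul_le hσ hσsmooth (∑ j, θ' (r, j) * emb s j)
          (∑ j, θ (r, j) * emb s j)
        rw [sum_mul_sub_sum_mul] at h
        refine h.trans (mul_le_mul_of_nonneg_left ?_ hc0)
        exact sq_le_sq.2 ((abs_sum_mul_le_rowNorm _ r (hemb s)).trans (le_abs_self _))
    _ = c0 / √m * ‖θ - θ'‖ ^ 2 := one_div_sqrt_mul_sum_rowNorm_sq c0 _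

end Network

theorem stmt18_general {S : Type*} [Fintype S] {d m : ℕ}
    (P : S → S → ℝ) (μ : S → ℝ) (γ l c0 : ℝ)
    (hPnonneg : ∀ s s', 0 ≤ P s s') (hProw : ∀ s, ∑ s', P s s' = 1)
    (hμnonneg : ∀ s, 0 ≤ μ s) (hμsum : ∑ s, μ s = 1)
    (hstat : ∀ s', ∑ s, μ s * P s s' = μ s')
    (hγ : γ ∈ Set.Ioo (0 : ℝ) 1)
    (σ : ℝ → ℝ) (hσdiff : Differentiable ℝ σ)
    (hσlip : ∀ u v, |σ u - σ v| ≤ l * |u - v|)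
    (hσsmooth : ∀ u v, |deriv σ u - deriv σ v| ≤ c0 * |u - v|)
    (b : Fin m → ℝ) (hb : ∀ r, |b r| ≤ 1)
    (emb : S → EuclideanSpace ℝ (Fin d)) (hemb : ∀ s, ‖emb s‖ ≤ 1)
    (V : EuclideanSpace ℝ (Fin m × Fin d) → EuclideanSpace ℝ S)
    (hV : ∀ θ s, V θ s = (1 / Real.sqrt m) * ∑ r, b r * σ (∑ j, θ (r, j) * emb s j))
    (θstar θ : EuclideanSpace ℝ (Fin m × Fin d)) :
    γ * ∑ s, ∑ s', μ s * P s s' *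
          fderiv ℝ V θ (θ - θstar) s * (V θ - V θstar) s'
        - ∑ s, μ s * fderiv ℝ V θ (θ - θstar) s * (V θ - V θstar) s
      ≤ -((1 - γ) * (⨅ x : {x : EuclideanSpace ℝ (Fin m × Fin d) // x ≠ 0},
              Real.sqrt (∑ s, μ s * (fderiv ℝ V θstar x.1 s) ^ 2) / ‖x.1‖) ^ 2
            * ‖θ - θstar‖ ^ 2)
        + 2 * (1 + γ) * c0 * l * (Real.sqrt m)⁻¹ * ‖θ - θstar‖ ^ 3 := by
  obtain ⟨hγ0, hγ1⟩ := hγ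
  have hl := nonneg_of_abs_sub_le_mul hσlip
  have hc0 := nonneg_of_abs_sub_le_mul hσsmooth
  set z := θ - θstar
  set J : S → ℝ := fun s => fderiv ℝ V θ z s
  set Jstar : S → ℝ := fun s => fderiv ℝ V θstar z s
  set Δ : S → ℝ := fun s => (V θ - V θstar) s
  have hJ : weightedNorm μ (J - Jstar) ≤ c0 / √m * ‖z‖ ^ 2 :=
    weightedNorm_le_of_abs_le hμnonneg hμsum (by positivity)
      (abs_fderiv_network_sub_le hb hemb hV hσdiff hσsmooth θ θstar)
  have hΔ : weightedNorm μ Δ ≤ l * ‖z‖ :=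
    weightedNorm_le_of_abs_le hμnonneg hμsum (by positivity)
      (abs_network_sub_le hb hemb hV hσlip θ θstar)
  have hJstar : weightedNorm μ Jstar ≤ l * ‖z‖ :=
    weightedNorm_le_of_abs_le hμnonneg hμsum (by positivity)
      (abs_fderiv_network_le hb hemb hV hσdiff hσlip θstar z)
  have hrem : weightedNorm μ (Δ - Jstar) ≤ c0 / √m * ‖z‖ ^ 2 :=
    weightedNorm_le_of_abs_le hμnonneg hμsum (by positivity)
      (abs_network_sub_sub_fderiv_le hb hemb hV hσdiff hσsmooth θ θstar)
  set σstar := ⨅ x : {x : EuclideanSpace ℝ (Fin m × Fin d) // x ≠ 0},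
    Real.sqrt (∑ s, μ s * (fderiv ℝ V θstar x.1 s) ^ 2) / ‖x.1‖
  have hσstar : σstar ^ 2 * ‖z‖ ^ 2 ≤ weightedNorm μ Jstar ^ 2 :=
    iInf_div_norm_sq_mul_sq_le (fun x => weightedNorm_nonneg μ fun s => fderiv ℝ V θstar x s) z
  calc bellmanForm P μ γ J Δ
      ≤ -((1 - γ) * weightedNorm μ Jstar ^ 2) + (1 + γ) * (weightedNorm μ (J - Jstar) *
          weightedNorm μ Δ + weightedNorm μ Jstar * weightedNorm μ (Δ - Jstar)) :=
        bellmanForm_le hPnonneg hμnonneg hProw hstat hγ0.le J Jstar Δ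
    _ ≤ -((1 - γ) * (σstar ^ 2 * ‖z‖ ^ 2)) +
          (1 + γ) * (c0 / √m * ‖z‖ ^ 2 * (l * ‖z‖) + l * ‖z‖ * (c0 / √m * ‖z‖ ^ 2)) := by
        gcongr <;> apply weightedNorm_nonneg
    _ = _ := by ring

/-- For the one-hidden-layer network,
`(θ−θ*)ᵀ J(θ)ᵀ D (γP−I) (V(θ)−V(θ*))
   ≤ −(1−γ) σ*² ‖θ−θ*‖² + 2(1+γ) c0 l m^{−1/2} ‖θ−θ*‖³`,
where `σ* = inf_{x≠0} ‖J(θ*)x‖_D / ‖x‖`. -/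
theorem stmt18 {S : Type*} [Fintype S] {d m : ℕ} (hm : 1 ≤ m)
    (P : S → S → ℝ) (μ : S → ℝ) (γ l c0 : ℝ)
    (hPnonneg : ∀ s s', 0 ≤ P s s') (hProw : ∀ s, ∑ s', P s s' = 1)
    (hμnonneg : ∀ s, 0 ≤ μ s) (hμsum : ∑ s, μ s = 1)
    (hstat : ∀ s', ∑ s, μ s * P s s' = μ s')
    (hγ : γ ∈ Set.Ioo (0 : ℝ) 1)
    (σ : ℝ → ℝ) (hσdiff : Differentiable ℝ σ)
    (hσlip : ∀ u v, |σ u - σ v| ≤ l * |u - v|)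
    (hσsmooth : ∀ u v, |deriv σ u - deriv σ v| ≤ c0 * |u - v|)
    (b : Fin m → ℝ) (hb : ∀ r, |b r| ≤ 1)
    (emb : S → EuclideanSpace ℝ (Fin d)) (hemb : ∀ s, ‖emb s‖ ≤ 1)
    (V : EuclideanSpace ℝ (Fin m × Fin d) → EuclideanSpace ℝ S)
    (hV : ∀ θ s, V θ s = (1 / Real.sqrt m) * ∑ r, b r * σ (∑ j, θ (r, j) * emb s j))
    (θstar θ : EuclideanSpace ℝ (Fin m × Fin d)) :
    γ * ∑ s, ∑ s', μ s * P s s' *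
          fderiv ℝ V θ (θ - θstar) s * (V θ - V θstar) s'
        - ∑ s, μ s * fderiv ℝ V θ (θ - θstar) s * (V θ - V θstar) s
      ≤ -((1 - γ) * (⨅ x : {x : EuclideanSpace ℝ (Fin m × Fin d) // x ≠ 0},
              Real.sqrt (∑ s, μ s * (fderiv ℝ V θstar x.1 s) ^ 2) / ‖x.1‖) ^ 2
            * ‖θ - θstar‖ ^ 2)
        + 2 * (1 + γ) * c0 * l * (Real.sqrt m)⁻¹ * ‖θ - θstar‖ ^ 3 :=
  stmt18_general P μ γ l c0 hPnonneg hProw hμnonneg hμsum hstat hγ σ hσdiff hσlip hσsmooth b hb emb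
    hemb V hV θstar θ
end
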